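/- arXiv:1302.1477 — 5 statements merged into one kernel-verified Lean document; each statement's English description precedes it below -/
import Mathlib

section
/- For any prime p > 2 and odd prime ℓ' ≠ p, the order of GL_n(𝔽_{ℓ'}) is divisible by p^{u_p}, where u_p = v_p(⌊n/(p-1)⌋!) + ⌊n/(p-1)⌋ and v_p denotes the p-adic valuation. -/
open Finset

private lemma padicValNat_le_of_dvd {p a b : ℕ} [Fact p.Prime] (h : a ∣ b) (hb : b ≠ 0) :
    padicValNat p a ≤ padicValNat p b :=
  (padicValNat_dvd_iff_le hb).mp (pow_padicValNat_dvd.trans h)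

private lemma padicValNat_factorial_eq_sum (p : ℕ) [Fact p.Prime] (m : ℕ) :
    padicValNat p m.factorial = ∑ k ∈ Icc 1 m, padicValNat p k := by
  induction m with
  | zero => simp
  | succ m ih =>
      rw [Nat.factorial_succ, padicValNat.mul (Nat.succ_ne_zero m) (Nat.factorial_ne_zero m), ih]
      rw [Finset.sum_Icc_succ_top (by omega)]
      simp only [Nat.succ_eq_add_one]
      omega

/-- For any prime `p > 2` and odd prime `ℓ' ≠ p`, the order of `GL_n(𝔽_{ℓ'})` is
divisible by `p ^ u_p` where `u_p = v_p(⌊n/(p-1)⌋!) + ⌊n/(p-1)⌋`. -/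
theorem stmt1 (n p ℓ' : ℕ) (hn : 0 < n) (hp : p.Prime) (hp2 : 2 < p)
    (hℓ' : ℓ'.Prime) (hℓodd : Odd ℓ') (hne : ℓ' ≠ p) [Fact ℓ'.Prime] :
    p ^ (padicValNat p (Nat.factorial (n / (p - 1))) + n / (p - 1)) ∣
      Nat.card (GL (Fin n) (ZMod ℓ')) := by
  haveI : Fact p.Prime := ⟨hp⟩
  set q := ℓ' with hq
  have hq1 : 1 < q := hℓ'.one_lt
  -- the order of q mod p
  have hcop : Nat.Coprime q p := (Nat.coprime_primes hℓ' hp).mpr hne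
  set u : (ZMod p)ˣ := ZMod.unitOfCoprime q hcop with hu
  set d : ℕ := orderOf u with hd
  have hdpos : 0 < d := orderOf_pos u
  have hdvd : d ∣ p - 1 := orderOf_dvd_of_pow_eq_one (ZMod.units_pow_card_sub_one_eq_one p u)
  have hdle : d ≤ p - 1 := Nat.le_of_dvd (by omega) hdvd
  -- p ∣ q ^ d - 1
  have hqd1 : 1 < q ^ d := Nat.one_lt_pow (by omega) hq1
  have hpd : p ∣ q ^ d - 1 := by
    have h1 : ((q : ZMod p)) ^ d = 1 := by
      have := pow_orderOf_eq_one u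
      have := congrArg (Units.val) this
      simp only [Units.val_pow_eq_pow_val, Units.val_one, hu, ZMod.coe_unitOfCoprime] at this
      exact this
    have h2 : ((q ^ d : ℕ) : ZMod p) = ((1 : ℕ) : ZMod p) := by push_cast; simpa using h1
    have h3 : q ^ d ≡ 1 [MOD p] := (ZMod.natCast_eq_natCast_iff _ _ _).mp h2
    exact (Nat.modEq_iff_dvd' (le_of_lt hqd1)).mp h3.symm
  have hx : ¬ p ∣ q ^ d := by
    intro h
    have := hp.dvd_of_dvd_pow h
    rw [Nat.prime_dvd_prime_iff_eq hp hℓ'] at this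
    exact hne this.symm
  have hpodd : Odd p := hp.odd_of_ne_two (by omega)
  set m : ℕ := n / (p - 1) with hm
  set m' : ℕ := n / d with hm'
  have hmm' : m ≤ m' := Nat.div_le_div_left hdle hdpos
  -- factor-wise divisibility
  have hfac : ∀ k ∈ Icc 1 m', p ^ (1 + padicValNat p k) ∣ q ^ (d * k) - 1 := by
    intro k hk
    rw [mem_Icc] at hk
    have hk0 : k ≠ 0 := by omega
    have hlt : 1 < q ^ (d * k) := Nat.one_lt_pow (by positivity) hq1
    have hne0 : q ^ (d * k) - 1 ≠ 0 := by omega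
    rw [padicValNat_dvd_iff_le hne0]
    have hLTE : padicValNat p ((q ^ d) ^ k - 1 ^ k) =
        padicValNat p (q ^ d - 1) + padicValNat p k :=
      padicValNat.pow_sub_pow hpodd hqd1 (by simpa using hpd) hx hk0
    rw [pow_mul]
    rw [one_pow] at hLTE
    rw [hLTE]
    have h1 : 1 ≤ padicValNat p (q ^ d - 1) :=
      (padicValNat_dvd_iff_le (by omega)).mp (by simpa using hpd)
    omega
  -- chain of divisibilities
  have hC : p ^ (padicValNat p (Nat.factorial m') + m') ∣ ∏ k ∈ Icc 1 m', (q ^ (d * k) - 1) := by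
    have : (∏ k ∈ Icc 1 m', p ^ (1 + padicValNat p k)) ∣
        ∏ k ∈ Icc 1 m', (q ^ (d * k) - 1) := Finset.prod_dvd_prod_of_dvd _ _ hfac
    have hE : padicValNat p (Nat.factorial m') + m' = ∑ k ∈ Icc 1 m', (1 + padicValNat p k) := by
      rw [Finset.sum_add_distrib, Finset.sum_const, Nat.card_Icc, smul_eq_mul, mul_one,
        padicValNat_factorial_eq_sum p m']
      rw [Nat.add_sub_cancel]
      exact Nat.add_comm _ _
    rw [hE, ← Finset.prod_pow_eq_pow_sum]
    exact this
  have hCB : (∏ k ∈ Icc 1 m', (q ^ (d * k) - 1)) ∣ ∏ j ∈ Icc 1 n, (q ^ j - 1) := by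
    have hinj : Set.InjOn (fun k => d * k) (Icc 1 m') := fun a _ b _ h =>
      Nat.eq_of_mul_eq_mul_left hdpos h
    have heq : ∏ k ∈ Icc 1 m', (q ^ (d * k) - 1) =
        ∏ j ∈ (Icc 1 m').image (fun k => d * k), (q ^ j - 1) :=
      (Finset.prod_image (f := fun j => q ^ j - 1) (fun a ha b hb h => hinj ha hb h)).symm
    rw [heq]
    apply Finset.prod_dvd_prod_of_subset
    intro j hj
    simp only [Finset.mem_image, mem_Icc] at hj ⊢
    obtain ⟨k, ⟨hk1, hk2⟩, rfl⟩ := hj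
    constructor
    · exact le_trans hdpos (Nat.le_mul_of_pos_right d (by omega))
    · calc d * k ≤ d * (n / d) := Nat.mul_le_mul_left d hk2
        _ ≤ n := Nat.mul_div_le n d
  have hBA : (∏ j ∈ Icc 1 n, (q ^ j - 1)) ∣ ∏ i ∈ range n, (q ^ n - q ^ i) := by
    have hre : (∏ j ∈ Icc 1 n, (q ^ j - 1)) = ∏ i ∈ range n, (q ^ (n - i) - 1) := by
      refine Finset.prod_nbij' (fun j => n - j) (fun i => n - i) ?_ ?_ ?_ ?_ ?_
      · intro j hj; rw [mem_Icc] at hj; rw [mem_range]; omega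
      · intro i hi; rw [mem_range] at hi; rw [mem_Icc]; omega
      · intro j hj; rw [mem_Icc] at hj; omega
      · intro i hi; rw [mem_range] at hi; omega
      · intro j hj; rw [mem_Icc] at hj; rw [Nat.sub_sub_self hj.2]
    rw [hre]
    apply Finset.prod_dvd_prod_of_dvd
    intro i hi
    rw [mem_range] at hi
    have : q ^ n - q ^ i = q ^ i * (q ^ (n - i) - 1) := by
      rw [Nat.mul_sub, mul_one, ← pow_add]
      congr 2
      omega
    rw [this]
    exact dvd_mul_left _ _
  have hcard : Nat.card (GL (Fin n) (ZMod ℓ')) = ∏ i ∈ range n, (q ^ n - q ^ i) := by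
    rw [Matrix.card_GL_field]
    rw [ZMod.card]
    exact Fin.prod_univ_eq_prod_range (fun i => q ^ n - q ^ i) n
  rw [hcard]
  -- combine
  have hmono : padicValNat p (Nat.factorial m) + m ≤ padicValNat p (Nat.factorial m') + m' := by
    have h1 : padicValNat p (Nat.factorial (p * m)) = padicValNat p (Nat.factorial m) + m :=
      padicValNat_factorial_mul m
    have h2 : padicValNat p (Nat.factorial (p * m')) = padicValNat p (Nat.factorial m') + m' :=
      padicValNat_factorial_mul m'
    rw [← h1, ← h2]
    exact padicValNat_le_of_dvd
      (Nat.factorial_dvd_factorial (Nat.mul_le_mul_left p hmm')) (Nat.factorial_ne_zero _)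
  exact dvd_trans (pow_dvd_pow p hmono) (dvd_trans hC (dvd_trans hCB hBA))
end

section
/- For a prime ℓ' ≡ 3 (mod 8), the 2-adic valuation of #GL_n(𝔽_{ℓ'}) is exactly v_2(n!) + n + ⌊n/2⌋. -/
private lemma v2_prod {ι : Type*} (s : Finset ι) (f : ι → ℕ) (h : ∀ i ∈ s, f i ≠ 0) :
    padicValNat 2 (∏ i ∈ s, f i) = ∑ i ∈ s, padicValNat 2 (f i) := by
  classical
  induction s using Finset.cons_induction with
  | empty => simp
  | cons a s ha ih =>
    rw [Finset.prod_cons, Finset.sum_cons, padicValNat.mul (h a (by simp))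
      (Finset.prod_ne_zero_iff.2 fun i hi => h i (by simp [hi])), ih fun i hi => h i (by simp [hi])]

private lemma v2_mod4 (m : ℕ) (h : m % 4 = 2) : padicValNat 2 m = 1 := by
  obtain ⟨a, rfl⟩ : ∃ a, m = 2 * (2 * a + 1) := ⟨m / 4, by omega⟩
  have h0 : padicValNat 2 (2 * a + 1) = 0 := padicValNat.eq_zero_of_not_dvd (by omega)
  rw [padicValNat.mul (by norm_num) (by omega), padicValNat.self (by norm_num), h0]

private lemma v2_mod8 (m : ℕ) (h : m % 8 = 4) : padicValNat 2 m = 2 := by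
  obtain ⟨a, rfl⟩ : ∃ a, m = 2 ^ 2 * (2 * a + 1) := ⟨m / 8, by omega⟩
  have h0 : padicValNat 2 (2 * a + 1) = 0 := padicValNat.eq_zero_of_not_dvd (by omega)
  rw [padicValNat.mul (by norm_num) (by omega), padicValNat.prime_pow, h0]

private lemma pow3mod8 (q m : ℕ) (hq : q % 8 = 3) :
    q ^ m % 8 = if m % 2 = 1 then 3 else 1 := by
  induction m with
  | zero => simp
  | succ k ih =>
    rw [pow_succ, Nat.mul_mod, ih, hq]
    rcases Nat.mod_two_eq_zero_or_one k with h | h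
    · have h2 : (k + 1) % 2 = 1 := by omega
      simp [h, h2]
    · have h2 : (k + 1) % 2 = 0 := by omega
      simp [h, h2]

private lemma v2_pow_sub_one (q : ℕ) (hq : q % 8 = 3) :
    ∀ k, 0 < k → padicValNat 2 (q ^ k - 1) =
      if k % 2 = 1 then 1 else 2 + padicValNat 2 k := by
  have hq3 : 3 ≤ q := by omega
  intro k
  induction k using Nat.strong_induction_on with
  | _ k ih =>
    intro hk
    rcases Nat.mod_two_eq_zero_or_one k with hke | hko
    · -- k even, k = m + m
      obtain ⟨m, rfl⟩ : ∃ m, k = m + m := ⟨k / 2, by omega⟩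
      have hm : 0 < m := by omega
      have hmlt : m < m + m := by omega
      have hqm3 : 3 ≤ q ^ m := le_trans hq3 (Nat.le_self_pow (by omega) q)
      have hfac : q ^ (m + m) - 1 = (q ^ m - 1) * (q ^ m + 1) := by
        obtain ⟨c, hc⟩ : ∃ c, q ^ m = c + 1 := ⟨q ^ m - 1, by omega⟩
        have hpow : q ^ (m + m) = q ^ m * q ^ m := by rw [← pow_add]
        have hring : (c + 1) * (c + 1) = c * (c + 1 + 1) + 1 := by ring
        rw [hpow, hc]
        simp only [Nat.add_sub_cancel]
        omega
      rw [hfac, padicValNat.mul (by omega) (by omega)]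
      have hmod := pow3mod8 q m hq
      have hv2 : padicValNat 2 (q ^ m + 1) = if m % 2 = 1 then 2 else 1 := by
        rcases Nat.mod_two_eq_zero_or_one m with hme | hmo
        · rw [if_neg (by omega)]
          have h8 : q ^ m % 8 = 1 := by rw [hmod, if_neg (by omega)]
          exact v2_mod4 _ (by omega)
        · rw [if_pos hmo]
          have h8 : q ^ m % 8 = 3 := by rw [hmod, if_pos hmo]
          exact v2_mod8 _ (by omega)
      rw [ih m hmlt hm, hv2]
      have h2m : padicValNat 2 (m + m) = 1 + padicValNat 2 m := by
        rw [show m + m = 2 * m by ring, padicValNat.mul (by norm_num) (by omega),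
          padicValNat.self (by norm_num)]
      rcases Nat.mod_two_eq_zero_or_one m with hme | hmo
      · rw [if_neg (by omega : ¬ m % 2 = 1), if_neg (by omega : ¬ (m + m) % 2 = 1), h2m]
        split_ifs <;> omega
      · have hv0 : padicValNat 2 m = 0 := padicValNat.eq_zero_of_not_dvd (by omega)
        rw [if_pos hmo, if_neg (by omega : ¬ (m + m) % 2 = 1), h2m, hv0]
        split_ifs <;> omega
    · -- k odd
      rw [if_pos hko]
      have hmod := pow3mod8 q k hq
      rw [if_pos hko] at hmod
      exact v2_mod4 _ (by omega)

private lemma sum_v2 (q : ℕ) (hq : q % 8 = 3) (m : ℕ) :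
    ∑ j ∈ Finset.range m, padicValNat 2 (q ^ (j + 1) - 1) =
      padicValNat 2 (Nat.factorial m) + m + m / 2 := by
  induction m with
  | zero => simp
  | succ k ih =>
    rw [Finset.sum_range_succ, ih, Nat.factorial_succ,
      padicValNat.mul (by omega) (Nat.factorial_ne_zero k),
      v2_pow_sub_one q hq (k + 1) (by omega)]
    rcases Nat.mod_two_eq_zero_or_one (k + 1) with he | ho
    · rw [if_neg (by omega)]
      have h1 : (k + 1) / 2 = k / 2 + 1 := by omega
      omega
    · rw [if_pos ho]
      have hv0 : padicValNat 2 (k + 1) = 0 := padicValNat.eq_zero_of_not_dvd (by omega)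
      have h1 : (k + 1) / 2 = k / 2 := by omega
      omega

/-- For a prime `ℓ' ≡ 3 (mod 8)`, the 2-adic valuation of `#GL_n(𝔽_{ℓ'})` is exactly
`v_2(n!) + n + ⌊n/2⌋`. -/
theorem stmt2 (n ℓ' : ℕ) (hn : 0 < n) (hℓ' : ℓ'.Prime) (hmod : ℓ' % 8 = 3)
    [Fact ℓ'.Prime] :
    padicValNat 2 (Nat.card (GL (Fin n) (ZMod ℓ'))) =
      padicValNat 2 (Nat.factorial n) + n + n / 2 := by
  have hq3 : 3 ≤ ℓ' := by omega
  have hcard : Fintype.card (ZMod ℓ') = ℓ' := ZMod.card ℓ'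
  rw [Matrix.card_GL_field, hcard]
  have hfac : ∀ i : Fin n, ℓ' ^ n - ℓ' ^ (i : ℕ) = ℓ' ^ (i : ℕ) * (ℓ' ^ (n - (i : ℕ)) - 1) := by
    intro i
    have hi : (i : ℕ) ≤ n := le_of_lt i.isLt
    rw [Nat.mul_sub, mul_one, ← pow_add, Nat.add_sub_cancel' hi]
  have hne : ∀ i : Fin n, ℓ' ^ (i : ℕ) * (ℓ' ^ (n - (i : ℕ)) - 1) ≠ 0 := by
    intro i
    have h2 : 3 ≤ ℓ' ^ (n - (i : ℕ)) := le_trans hq3 (Nat.le_self_pow (by omega) ℓ')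
    exact Nat.mul_ne_zero (pow_ne_zero _ (by omega)) (by omega)
  rw [Finset.prod_congr rfl (fun i _ => hfac i), v2_prod _ _ (fun i _ => hne i)]
  have hterm : ∀ i : Fin n, padicValNat 2 (ℓ' ^ (i : ℕ) * (ℓ' ^ (n - (i : ℕ)) - 1)) =
      padicValNat 2 (ℓ' ^ (n - (i : ℕ)) - 1) := by
    intro i
    have h2 : 3 ≤ ℓ' ^ (n - (i : ℕ)) := le_trans hq3 (Nat.le_self_pow (by omega) ℓ')
    rw [padicValNat.mul (pow_ne_zero _ (by omega)) (by omega),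
      padicValNat.eq_zero_of_not_dvd, zero_add]
    intro hdvd
    have : (2 : ℕ) ∣ ℓ' := (Nat.Prime.prime Nat.prime_two).dvd_of_dvd_pow hdvd
    omega
  rw [Finset.sum_congr rfl (fun i _ => hterm i)]
  rw [Fin.sum_univ_eq_sum_range (fun i => padicValNat 2 (ℓ' ^ (n - i) - 1))]
  have hrefl : ∑ j ∈ Finset.range n, padicValNat 2 (ℓ' ^ (n - j) - 1) =
      ∑ j ∈ Finset.range n, padicValNat 2 (ℓ' ^ (j + 1) - 1) := by
    rw [← Finset.sum_range_reflect (fun j => padicValNat 2 (ℓ' ^ (j + 1) - 1)) n]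
    refine Finset.sum_congr rfl fun j hj => ?_
    have hj' : j < n := Finset.mem_range.1 hj
    have he : n - 1 - j + 1 = n - j := by omega
    rw [he]
  rw [hrefl]
  exact sum_v2 ℓ' hmod n
end

section
/- There is no way to write 4 = Σ_{d} n_d·φ(d) with nonnegative integers n_d satisfying (i) n_d even whenever d ≤ 2, (ii) e := lcm{d : n_d > 0} divisible by 4, and (iii) e/2 having an even divisor greater than 6 dividing e/2. More precisely: for any finitely supported function n : ℕ → ℕ with Σ n_d φ(d) = 4, n_1 and n_2 even, and 4 ∣ lcm{d : n_d > 0}, every even divisor m of (lcm{d : n_d > 0})/2 satisfies m ≤ 6. -/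
lemma four_dvd_or {a b : ℕ} (h : 4 ∣ Nat.lcm a b) : 4 ∣ a ∨ 4 ∣ b := by
  rcases eq_or_ne a 0 with rfl | ha
  · exact Or.inl (dvd_zero _)
  rcases eq_or_ne b 0 with rfl | hb
  · exact Or.inr (dvd_zero _)
  have h2 : (4:ℕ) = 2^2 := rfl
  rw [h2, Nat.Prime.pow_dvd_iff_le_factorization Nat.prime_two (Nat.lcm_ne_zero ha hb),
    Nat.factorization_lcm ha hb, Finsupp.sup_apply, le_sup_iff] at h
  rcases h with h | h
  · exact Or.inl (h2 ▸ (Nat.Prime.pow_dvd_iff_le_factorization Nat.prime_two ha).2 h)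
  · exact Or.inr (h2 ▸ (Nat.Prime.pow_dvd_iff_le_factorization Nat.prime_two hb).2 h)

lemma exists_four_dvd {S : Finset ℕ} (h : 4 ∣ S.lcm id) : ∃ d ∈ S, 4 ∣ d := by
  classical
  induction S using Finset.induction_on with
  | empty => simp [Finset.lcm_empty] at h
  | @insert a s ha ih =>
    rw [Finset.lcm_insert] at h
    rcases four_dvd_or h with h | h
    · exact ⟨a, Finset.mem_insert_self a s, h⟩
    · obtain ⟨d, hd, hd4⟩ := ih h
      exact ⟨d, Finset.mem_insert_of_mem hd, hd4⟩

lemma dvd_120_of_totient_le_four {d : ℕ} (hd : d ≠ 0) (h : Nat.totient d ≤ 4) : d ∣ 120 := by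
  rw [Nat.dvd_iff_prime_pow_dvd_dvd]
  intro p k pp hpk
  rcases Nat.eq_zero_or_pos k with rfl | hk
  · simp
  have pp' : p.Prime := pp
  have hpos0 : Nat.totient (p ^ k) ≤ 4 := by
    have h1 : Nat.totient (p ^ k) ∣ Nat.totient d := Nat.totient_dvd_of_dvd hpk
    exact le_trans (Nat.le_of_dvd (Nat.totient_pos.2 (Nat.pos_of_ne_zero hd)) h1) h
  rw [Nat.totient_prime_pow pp' hk] at hpos0
  have hp2 : 2 ≤ p := pp'.two_le
  have hpow : 0 < p ^ (k - 1) := Nat.pow_pos (by omega)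
  by_cases hp7 : 7 ≤ p
  · exfalso
    have : 1 * (p - 1) ≤ p ^ (k - 1) * (p - 1) := Nat.mul_le_mul_right _ hpow
    omega
  · interval_cases p
    · -- p = 2
      have hk3 : k ≤ 3 := by
        by_contra hc
        have : 2 ^ 3 ≤ 2 ^ (k - 1) := Nat.pow_le_pow_right (by norm_num) (by omega)
        omega
      exact dvd_trans (pow_dvd_pow 2 hk3) (by norm_num)
    · -- p = 3
      have hk1 : k ≤ 1 := by
        by_contra hc
        have : 3 ^ 1 ≤ 3 ^ (k - 1) := Nat.pow_le_pow_right (by norm_num) (by omega)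
        omega
      exact dvd_trans (pow_dvd_pow 3 hk1) (by norm_num)
    · exact absurd pp' (by norm_num)
    · -- p = 5
      have hk1 : k ≤ 1 := by
        by_contra hc
        have : 5 ^ 1 ≤ 5 ^ (k - 1) := Nat.pow_le_pow_right (by norm_num) (by omega)
        omega
      exact dvd_trans (pow_dvd_pow 5 hk1) (by norm_num)
    · exact absurd pp' (by norm_num)

set_option maxRecDepth 100000 in
lemma case_enum : ∀ d ∈ Finset.range 121, d ∣ 120 → 4 ∣ d → Nat.totient d ≤ 4 →
    d = 4 ∨ d = 8 ∨ d = 12 := by decide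

set_option maxRecDepth 100000 in
lemma case_enum2 : ∀ d ∈ Finset.range 121, d ∣ 120 → Nat.totient d ≤ 2 → d ∣ 12 := by decide

/-- For any finitely supported `n : ℕ → ℕ` (with `n 0 = 0`) satisfying
`Σ_d n_d·φ(d) = 4`, with `n_1` and `n_2` even and `4 ∣ e := lcm{d : n_d > 0}`,
every even divisor `m` of `e/2` satisfies `m ≤ 6`. -/
theorem stmt8 (n : ℕ →₀ ℕ) (h0 : n 0 = 0)
    (hsum : (n.sum fun d k => k * Nat.totient d) = 4)
    (h1 : Even (n 1)) (h2 : Even (n 2))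
    (h4 : 4 ∣ n.support.lcm id) :
    ∀ m : ℕ, Even m → m ∣ (n.support.lcm id) / 2 → m ≤ 6 := by
  classical
  intro m _ hmd
  set S := n.support with hS
  have hsum' : (∑ d ∈ S, n d * Nat.totient d) = 4 := hsum
  have hne : ∀ d ∈ S, n d ≠ 0 := fun d hd => Finsupp.mem_support_iff.1 hd
  have hdz : ∀ d ∈ S, d ≠ 0 := by
    intro d hd hdd; subst hdd; exact hne 0 hd h0
  have hterm : ∀ d ∈ S, n d * Nat.totient d ≤ 4 := by
    intro d hd
    rw [← hsum']
    exact Finset.single_le_sum (f := fun d => n d * Nat.totient d) (fun i _ => Nat.zero_le _) hd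
  have htot : ∀ d ∈ S, Nat.totient d ≤ 4 := by
    intro d hd
    calc Nat.totient d ≤ n d * Nat.totient d :=
          Nat.le_mul_of_pos_left _ (Nat.pos_of_ne_zero (hne d hd))
      _ ≤ 4 := hterm d hd
  obtain ⟨d0, hd0S, hd04⟩ := exists_four_dvd h4
  have hdvd120 : d0 ∣ 120 := dvd_120_of_totient_le_four (hdz _ hd0S) (htot _ hd0S)
  have hcases : d0 = 4 ∨ d0 = 8 ∨ d0 = 12 :=
    case_enum d0 (Finset.mem_range.2 (by
      have := Nat.le_of_dvd (by norm_num) hdvd120; omega)) hdvd120 hd04 (htot _ hd0S)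
  -- helper for the singleton cases (d0 = 8 or 12, where φ d0 = 4)
  have singleton_case : ∀ (hphi : Nat.totient d0 = 4), S = {d0} := by
    intro hphi
    have h1' : n d0 * Nat.totient d0 + ∑ d ∈ S.erase d0, n d * Nat.totient d = 4 := by
      exact (Finset.add_sum_erase S (fun d => n d * Nat.totient d) hd0S).trans hsum'
    have hnd0 : 1 ≤ n d0 := Nat.pos_of_ne_zero (hne _ hd0S)
    have hrest : ∑ d ∈ S.erase d0, n d * Nat.totient d = 0 := by
      rw [hphi] at h1'; omega
    apply Finset.Subset.antisymm
    · intro d hd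
      rw [Finset.mem_singleton]
      by_contra hdd
      have hdm : d ∈ S.erase d0 := Finset.mem_erase.2 ⟨hdd, hd⟩
      have := (Finset.sum_eq_zero_iff.1 hrest) d hdm
      have hφ : 0 < Nat.totient d := Nat.totient_pos.2 (Nat.pos_of_ne_zero (hdz d hd))
      rcases Nat.mul_eq_zero.1 this with h' | h'
      · exact hne d hd h'
      · omega
    · exact Finset.singleton_subset_iff.2 hd0S
  rcases hcases with rfl | rfl | rfl
  · -- d0 = 4
    have h1' : n 4 * Nat.totient 4 + ∑ d ∈ S.erase 4, n d * Nat.totient d = 4 := by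
      exact (Finset.add_sum_erase S (a := 4) (fun d => n d * Nat.totient d) hd0S).trans hsum'
    have hphi4 : Nat.totient 4 = 2 := by decide
    have hn4 : 1 ≤ n 4 := Nat.pos_of_ne_zero (hne _ hd0S)
    have hrest : ∑ d ∈ S.erase 4, n d * Nat.totient d ≤ 2 := by
      rw [hphi4] at h1'; omega
    have hd12 : ∀ d ∈ S, d ∣ 12 := by
      intro d hd
      by_cases hdd : d = 4
      · subst hdd; norm_num
      · have hdm : d ∈ S.erase 4 := Finset.mem_erase.2 ⟨hdd, hd⟩
        have hle : n d * Nat.totient d ≤ 2 :=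
          le_trans (Finset.single_le_sum (f := fun d => n d * Nat.totient d)
            (fun i _ => Nat.zero_le _) hdm) hrest
        have htot2 : Nat.totient d ≤ 2 :=
          le_trans (Nat.le_mul_of_pos_left _ (Nat.pos_of_ne_zero (hne d hd))) hle
        have h120 : d ∣ 120 := dvd_120_of_totient_le_four (hdz d hd) (le_trans htot2 (by norm_num))
        exact case_enum2 d (Finset.mem_range.2 (by
          have := Nat.le_of_dvd (by norm_num) h120; omega)) h120 htot2
    have hedvd : S.lcm id ∣ 12 := Finset.lcm_dvd (fun b hb => hd12 b hb)
    have he12 : S.lcm id ≤ 12 := Nat.le_of_dvd (by norm_num) hedvd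
    have hene : S.lcm id ≠ 0 := by
      intro h; rw [h] at hedvd; norm_num at hedvd
    have he4 : 4 ≤ S.lcm id := Nat.le_of_dvd (Nat.pos_of_ne_zero hene) h4
    have := Nat.le_of_dvd (by omega) hmd
    omega
  · -- d0 = 8
    have hSeq : S = {8} := singleton_case (by decide)
    rw [hSeq] at hmd
    simp [Finset.lcm_singleton] at hmd
    exact le_trans (Nat.le_of_dvd (by norm_num) hmd) (by norm_num)
  · -- d0 = 12
    have hSeq : S = {12} := singleton_case (by decide)
    rw [hSeq] at hmd
    simp [Finset.lcm_singleton] at hmd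
    exact le_trans (Nat.le_of_dvd (by norm_num) hmd) (by norm_num)
end

section
/- The solutions to 6 = Σ_d n_d·φ(d) with nonnegative integers n_d, n_d even for d ≤ 2, 4 ∣ e := lcm{d : n_d > 0}, and such that e/2 has an even divisor > 6, are exactly the four decompositions {8,6}, {8,3}, {4,10}, {4,5} (each with multiplicity one). -/
set_option maxRecDepth 10000
set_option maxHeartbeats 1600000

/-- The solutions to `6 = Σ_d n_d·φ(d)` with `n` finitely supported (`n 0 = 0`),
`n_1, n_2` even, `4 ∣ e := lcm{d : n_d > 0}`, and such that `e/2` has an even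
divisor `> 6`, are exactly the four decompositions `{8,6}`, `{8,3}`, `{4,10}`,
`{4,5}`, each with multiplicity one. -/
theorem stmt10 (n : ℕ →₀ ℕ) (h0 : n 0 = 0)
    (hsum : (n.sum fun d k => k * Nat.totient d) = 6)
    (h1 : Even (n 1)) (h2 : Even (n 2))
    (h4 : 4 ∣ n.support.lcm id)
    (hbig : ∃ m : ℕ, Even m ∧ 6 < m ∧ m ∣ (n.support.lcm id) / 2) :
    (n 8 = 1 ∧ n 6 = 1 ∧ ∀ d, d ≠ 8 → d ≠ 6 → n d = 0) ∨
    (n 8 = 1 ∧ n 3 = 1 ∧ ∀ d, d ≠ 8 → d ≠ 3 → n d = 0) ∨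
    (n 4 = 1 ∧ n 10 = 1 ∧ ∀ d, d ≠ 4 → d ≠ 10 → n d = 0) ∨
    (n 4 = 1 ∧ n 5 = 1 ∧ ∀ d, d ≠ 4 → d ≠ 5 → n d = 0) := by
  classical
  have hlt : ∀ d, n d ≠ 0 → d < 19 := by
    intro d hdne
    have hd : d ∈ n.support := Finsupp.mem_support_iff.mpr hdne
    have hd0 : d ≠ 0 := fun h => hdne (h ▸ h0)
    have hle : n d * Nat.totient d ≤ 6 := by
      rw [← hsum, Finsupp.sum]
      exact Finset.single_le_sum (f := fun d => n d * Nat.totient d)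
        (fun i _ => Nat.zero_le _) hd
    have hφ : Nat.totient d ≤ 6 :=
      le_trans (Nat.le_mul_of_pos_left _ (Nat.pos_of_ne_zero hdne)) hle
    have hdvd : d ∣ 2520 := by
      rw [Nat.dvd_iff_prime_pow_dvd_dvd]
      intro p k hp hpk
      have hk6 : Nat.totient (p ^ k) ≤ 6 := by
        have hdd : Nat.totient (p ^ k) ∣ Nat.totient d := Nat.totient_dvd_of_dvd hpk
        exact le_trans (Nat.le_of_dvd (Nat.totient_pos.mpr (Nat.pos_of_ne_zero hd0)) hdd) hφ
      rcases k with _ | k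
      · simpa using one_dvd _
      · rw [Nat.totient_prime_pow hp (Nat.succ_pos k)] at hk6
        simp only [Nat.succ_sub_one] at hk6
        have hp2 := hp.two_le
        have hpk1 : 1 ≤ p ^ k := Nat.one_le_pow _ _ (by omega)
        have hple : p ≤ 7 := by
          have := le_trans (Nat.le_mul_of_pos_left (p-1) (by omega : 0 < p ^ k)) hk6
          omega
        interval_cases p
        · -- p = 2
          have hk2 : k ≤ 2 := by
            by_contra hk
            have : 2 ^ 3 ≤ 2 ^ k := Nat.pow_le_pow_right (by norm_num) (by omega)
            omega
          exact dvd_trans (pow_dvd_pow 2 (by omega : k + 1 ≤ 3)) (by norm_num)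
        · -- p = 3
          have hk2 : k ≤ 1 := by
            by_contra hk
            have : 3 ^ 2 ≤ 3 ^ k := Nat.pow_le_pow_right (by norm_num) (by omega)
            omega
          exact dvd_trans (pow_dvd_pow 3 (by omega : k + 1 ≤ 2)) (by norm_num)
        · exact absurd hp (by norm_num)
        · -- p = 5
          have hk2 : k = 0 := by
            by_contra hk
            have : 5 ^ 1 ≤ 5 ^ k := Nat.pow_le_pow_right (by norm_num) (by omega)
            omega
          subst hk2; norm_num
        · exact absurd hp (by norm_num)
        · -- p = 7
          have hk2 : k = 0 := by
            by_contra hk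
            have : 7 ^ 1 ≤ 7 ^ k := Nat.pow_le_pow_right (by norm_num) (by omega)
            omega
          subst hk2; norm_num
    have hmem : d ∈ Nat.divisors 2520 := Nat.mem_divisors.mpr ⟨hdvd, by norm_num⟩
    exact (by decide : ∀ d ∈ Nat.divisors 2520, Nat.totient d ≤ 6 → d < 19) d hmem hφ
  have hsub : n.support ⊆ Finset.range 19 := fun d hd =>
    Finset.mem_range.mpr (hlt d (Finsupp.mem_support_iff.mp hd))
  have h6 : ∑ d ∈ Finset.range 19, n d * Nat.totient d = 6 := by
    rw [← hsum]
    exact (Finsupp.sum_of_support_subset n hsub (fun d k => k * Nat.totient d)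
      (fun i _ => zero_mul _)).symm
  simp only [Finset.sum_range_succ, Finset.sum_range_zero] at h6
  rw [show Nat.totient 0 = 0 by decide,
      show Nat.totient 1 = 1 by decide,
      show Nat.totient 2 = 1 by decide,
      show Nat.totient 3 = 2 by decide,
      show Nat.totient 4 = 2 by decide,
      show Nat.totient 5 = 4 by decide,
      show Nat.totient 6 = 2 by decide,
      show Nat.totient 7 = 6 by decide,
      show Nat.totient 8 = 4 by decide,
      show Nat.totient 9 = 6 by decide,
      show Nat.totient 10 = 4 by decide,
      show Nat.totient 11 = 10 by decide,
      show Nat.totient 12 = 4 by decide,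
      show Nat.totient 13 = 12 by decide,
      show Nat.totient 14 = 6 by decide,
      show Nat.totient 15 = 8 by decide,
      show Nat.totient 16 = 8 by decide,
      show Nat.totient 17 = 16 by decide,
      show Nat.totient 18 = 6 by decide] at h6
  have key : ∀ L : ℕ, 0 < L → L ≤ 12 → n.support.lcm id ∣ L → False := by
    intro L hL0 hL12 hdvd
    obtain ⟨m, _, hm6, hmd⟩ := hbig
    have h2 : 2 ∣ n.support.lcm id := dvd_trans (by norm_num) h4
    obtain ⟨c, hc⟩ := h2
    rw [hc, Nat.mul_div_cancel_left c (by norm_num)] at hmd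
    have h2m : 2 * m ∣ n.support.lcm id := by
      rw [hc]; exact mul_dvd_mul_left 2 hmd
    have := Nat.le_of_dvd hL0 (h2m.trans hdvd)
    omega
  have lcmdvd : ∀ L : ℕ, (∀ d, n d ≠ 0 → d ∣ L) → n.support.lcm id ∣ L := fun L h =>
    Finset.lcm_dvd fun d hd => h d (Finsupp.mem_support_iff.mp hd)
  rcases Nat.eq_zero_or_pos (n 8) with h8 | h8
  · rcases Nat.eq_zero_or_pos (n 12) with h12 | h12
    · rcases Nat.eq_zero_or_pos (n 4) with hn4 | hn4
      · exfalso
        have hd630 : n.support.lcm id ∣ 630 := lcmdvd 630 (by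
          intro d hdne
          have := hlt d hdne
          interval_cases d <;> first | omega | decide)
        have h4' : (4:ℕ) ∣ 630 := h4.trans hd630
        norm_num at h4'
      · rcases Nat.eq_zero_or_pos (n 5) with hn5 | hn5
        · rcases Nat.eq_zero_or_pos (n 10) with hn10 | hn10
          · exact absurd (lcmdvd 12 (by
              intro d hdne
              have := hlt d hdne
              interval_cases d <;> first | omega | decide))
              (fun hdd => key 12 (by norm_num) le_rfl hdd)
          · refine Or.inr (Or.inr (Or.inl ⟨by omega, by omega, ?_⟩))
            intro d hd4 hd10
            by_contra hdne
            have := hlt d hdne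
            interval_cases d <;> omega
        · refine Or.inr (Or.inr (Or.inr ⟨by omega, by omega, ?_⟩))
          intro d hd4 hd5
          by_contra hdne
          have := hlt d hdne
          interval_cases d <;> omega
    · exact absurd (lcmdvd 12 (by
        intro d hdne
        have := hlt d hdne
        interval_cases d <;> first | omega | decide))
        (fun hdd => key 12 (by norm_num) le_rfl hdd)
  · rcases Nat.eq_zero_or_pos (n 3) with hn3 | hn3
    · rcases Nat.eq_zero_or_pos (n 6) with hn6 | hn6
      · exact absurd (lcmdvd 8 (by
          intro d hdne
          have := hlt d hdne
          interval_cases d <;> first | omega | decide))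
          (fun hdd => key 8 (by norm_num) (by norm_num) hdd)
      · refine Or.inl ⟨by omega, by omega, ?_⟩
        intro d hd8 hd6
        by_contra hdne
        have := hlt d hdne
        interval_cases d <;> omega
    · refine Or.inr (Or.inl ⟨by omega, by omega, ?_⟩)
      intro d hd8 hd3
      by_contra hdne
      have := hlt d hdne
      interval_cases d <;> omega
end

section
/- For all x ∈ [−e⁻¹, 0), the lower branch of the Lambert W function satisfies −1 ≥ W₋₁(x) ≥ L(x), where L(x) = W₋₁(−1/4) for x ∈ [−e⁻¹, −1/4) and L(x) = 2·log(−x) for x ∈ [−1/4, 0). -/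
lemma stmt18_aux : StrictAntiOn (fun w : ℝ => w * Real.exp w) (Set.Iic (-1)) := by
  apply strictAntiOn_of_deriv_neg (convex_Iic _)
  · exact (continuous_id.mul Real.continuous_exp).continuousOn
  · intro x hx
    rw [interior_Iic] at hx
    have hd : HasDerivAt (fun w : ℝ => w * Real.exp w)
        (1 * Real.exp x + x * Real.exp x) x :=
      (hasDerivAt_id x).mul (Real.hasDerivAt_exp x)
    rw [hd.deriv]
    have hex : 0 < Real.exp x := Real.exp_pos x
    nlinarith [hx.out]

/-- Let `W` be the lower real branch `W₋₁` of the Lambert W function,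
characterized on `[−e⁻¹, 0)` by `W(x)·exp(W(x)) = x` and `W(x) ≤ −1`.
Then for all `x ∈ [−e⁻¹, 0)` we have `−1 ≥ W(x) ≥ L(x)`, where
`L(x) = W(−1/4)` for `x ∈ [−e⁻¹, −1/4)` and `L(x) = 2·log(−x)` for
`x ∈ [−1/4, 0)`. -/
theorem stmt18 (W : ℝ → ℝ)
    (hW : ∀ x : ℝ, -Real.exp (-1) ≤ x → x < 0 →
      W x * Real.exp (W x) = x ∧ W x ≤ -1) :
    ∀ x : ℝ, -Real.exp (-1) ≤ x → x < 0 →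
      -1 ≥ W x ∧ W x ≥ (if x < -1/4 then W (-1/4) else 2 * Real.log (-x)) := by
  intro x hx hx0
  obtain ⟨hfx, hwle⟩ := hW x hx hx0
  refine ⟨hwle, ?_⟩
  have hexp1 : Real.exp 1 < 4 := by
    have := Real.exp_one_lt_d9; linarith
  have h14 : -Real.exp (-1) ≤ -1/4 := by
    have h1 : Real.exp (-1) = (Real.exp 1)⁻¹ := by
      rw [Real.exp_neg]
    have h2 : (0:ℝ) < Real.exp 1 := Real.exp_pos 1
    have h3 : (Real.exp 1)⁻¹ * Real.exp 1 = 1 := inv_mul_cancel₀ h2.ne'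
    have h4 : (0:ℝ) < (Real.exp 1)⁻¹ := by positivity
    rw [h1]
    nlinarith
  split_ifs with h
  · obtain ⟨hf4, hw4⟩ := hW (-1/4) h14 (by norm_num)
    by_contra hlt
    push_neg at hlt
    have := stmt18_aux (Set.mem_Iic.mpr hwle) (Set.mem_Iic.mpr hw4) hlt
    simp only at this
    rw [hfx, hf4] at this
    linarith
  · push_neg at h
    set y := 2 * Real.log (-x) with hy
    set t := -x with ht
    have ht0 : 0 < t := by simp [ht]; linarith
    have ht4 : t ≤ 1/4 := by simp [ht]; linarith
    have hst := Real.sq_sqrt ht0.le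
    have hs0 : 0 < Real.sqrt t := Real.sqrt_pos.mpr ht0
    -- log t ≥ 2 - 2/√t
    have hlog : Real.log t ≥ 2 - 2 / Real.sqrt t := by
      have h1 : Real.log (Real.sqrt t)⁻¹ ≤ (Real.sqrt t)⁻¹ - 1 :=
        Real.log_le_sub_one_of_pos (by positivity)
      have h2 : Real.log (Real.sqrt t) = Real.log t / 2 := Real.log_sqrt ht0.le
      rw [Real.log_inv, h2] at h1
      rw [div_eq_mul_inv]
      linarith
    have hkey : -2 * t * Real.log t ≤ 1 := by
      have h3 : -2 * t * Real.log t ≤ -2 * t * (2 - 2 / Real.sqrt t) := by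
        nlinarith
      have h4 : t / Real.sqrt t = Real.sqrt t := by
        field_simp; exact hst.symm
      have h5 : -2 * t * (2 - 2 / Real.sqrt t) = 4 * Real.sqrt t - 4 * t := by
        field_simp; nlinarith
      nlinarith [sq_nonneg (2 * Real.sqrt t - 1)]
    have hy1 : y ≤ -1 := by
      have hl4 : Real.log t ≤ Real.log (1/4) := Real.log_le_log ht0 ht4
      have : Real.log (1/4) = -(2 * Real.log 2) := by
        rw [show (1/4 : ℝ) = (2 : ℝ)^(-2 : ℤ) by norm_num,
          Real.log_zpow]
        push_cast; ring
      have hl2 := Real.log_two_gt_d9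
      rw [hy, ht]
      linarith
    have hexpy : Real.exp y = t ^ 2 := by
      rw [hy, show (2 : ℝ) * Real.log (-x) = Real.log (-x) * 2 by ring,
        Real.exp_mul, Real.exp_log (by linarith : (0:ℝ) < -x)]
      norm_num [ht]
    have hfy : y * Real.exp y ≥ x := by
      rw [hexpy]
      have h6 : 0 ≤ t * (1 + 2 * t * Real.log t) := mul_nonneg ht0.le (by linarith)
      have h7 : x = -t := by rw [ht]; ring
      rw [h7, hy]
      nlinarith [h6]
    by_contra hlt
    push_neg at hlt
    have := stmt18_aux (Set.mem_Iic.mpr hwle) (Set.mem_Iic.mpr hy1) hlt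
    simp only at this
    rw [hfx] at this
    linarith
end
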